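/- arXiv:2008.00822 — 2 statements merged into one kernel-verified Lean document; each statement's English description precedes it below -/
import Mathlib

section
/- (Proposition 2, part 2, in contracted form.) Let g be a pointwise-hermitian C¹ metric on ℂⁿ with real and imaginary parts g = g^R + i·g^I. Then at every point, for every index γ and every real vector w ∈ ℝⁿ: Σ_{α,β} (∂_γ̄ g_{αβ̄} − ∂_β̄ g_{αγ̄} + ∂_α g_{βγ̄}) w^α w^β = Σ_{α,β} (½·∂^x_γ g^R_{αβ̄} − Φ^{γ--}_{αβ} + i·Φ^{γ-+}_{αβ}) w^α w^β. -/
open Complex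

noncomputable section

/-- The `α`-th standard basis vector of `ℂⁿ`. -/
def eV (n : ℕ) (α : Fin n) : Fin n → ℂ := fun i => if i = α then 1 else 0

/-- `∂^x_α`: partial derivative of `f : ℂⁿ → ℂ` at `z` in the real direction `x^α`. -/
def dX {n : ℕ} (α : Fin n) (f : (Fin n → ℂ) → ℂ) (z : Fin n → ℂ) : ℂ :=
  deriv (fun s : ℝ => f (fun i => z i + (s : ℂ) * eV n α i)) 0

/-- `∂^t_α`: partial derivative of `f : ℂⁿ → ℂ` at `z` in the imaginary direction `t^α`. -/
def dT {n : ℕ} (α : Fin n) (f : (Fin n → ℂ) → ℂ) (z : Fin n → ℂ) : ℂ :=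
  deriv (fun s : ℝ => f (fun i => z i + (s : ℂ) * Complex.I * eV n α i)) 0

/-- Wirtinger derivative `∂_α = ½(∂^x_α − i ∂^t_α)`. -/
def dW {n : ℕ} (α : Fin n) (f : (Fin n → ℂ) → ℂ) (z : Fin n → ℂ) : ℂ :=
  (dX α f z - Complex.I * dT α f z) / 2

/-- Conjugate Wirtinger derivative `∂_ᾱ = ½(∂^x_α + i ∂^t_α)`. -/
def dWbar {n : ℕ} (α : Fin n) (f : (Fin n → ℂ) → ℂ) (z : Fin n → ℂ) : ℂ :=
  (dX α f z + Complex.I * dT α f z) / 2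

/-- The `(i,j)` entry of the metric, as a `ℂ`-valued function `g_{i j̄}`. -/
def gF {n : ℕ} (g : (Fin n → ℂ) → Matrix (Fin n) (Fin n) ℂ) (i j : Fin n) :
    (Fin n → ℂ) → ℂ := fun z => g z i j

/-- The real part `g^R_{i j̄}` of the metric entry, coerced into `ℂ`. -/
def gR {n : ℕ} (g : (Fin n → ℂ) → Matrix (Fin n) (Fin n) ℂ) (i j : Fin n) :
    (Fin n → ℂ) → ℂ := fun z => ((g z i j).re : ℂ)

/-- The imaginary part `g^I_{i j̄}` of the metric entry, coerced into `ℂ`. -/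
def gI {n : ℕ} (g : (Fin n → ℂ) → Matrix (Fin n) (Fin n) ℂ) (i j : Fin n) :
    (Fin n → ℂ) → ℂ := fun z => ((g z i j).im : ℂ)

/-- `g` is pointwise hermitian: `g_{αβ̄} = conj (g_{βᾱ})`. -/
def IsHermitianMetric {n : ℕ} (g : (Fin n → ℂ) → Matrix (Fin n) (Fin n) ℂ) : Prop :=
  ∀ z i j, g z i j = (starRingEnd ℂ) (g z j i)

/-- `g` is continuously differentiable (entrywise, as a map over `ℝ`). -/
def MetricC1 {n : ℕ} (g : (Fin n → ℂ) → Matrix (Fin n) (Fin n) ℂ) : Prop :=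
  ∀ i j, ContDiff ℝ 1 (gF g i j)

/-- Primary field `Φ^{γ++}_{αβ}`. -/
def PhiPP {n : ℕ} (g : (Fin n → ℂ) → Matrix (Fin n) (Fin n) ℂ) (γ α β : Fin n)
    (z : Fin n → ℂ) : ℂ :=
  (dX γ (gR g α β) z - dX α (gR g β γ) z - dX β (gR g α γ) z) / 2

/-- Primary field `Φ^{γ+-}_{αβ}`. -/
def PhiPM {n : ℕ} (g : (Fin n → ℂ) → Matrix (Fin n) (Fin n) ℂ) (γ α β : Fin n)
    (z : Fin n → ℂ) : ℂ :=
  (dX γ (gI g α β) z - dX α (gI g β γ) z - dX β (gI g α γ) z) / 2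

/-- Primary field `Φ^{γ-+}_{αβ}`. -/
def PhiMP {n : ℕ} (g : (Fin n → ℂ) → Matrix (Fin n) (Fin n) ℂ) (γ α β : Fin n)
    (z : Fin n → ℂ) : ℂ :=
  (dT γ (gR g α β) z - dT α (gR g β γ) z - dT β (gR g α γ) z) / 2

/-- Primary field `Φ^{γ--}_{αβ}`. -/
def PhiMM {n : ℕ} (g : (Fin n → ℂ) → Matrix (Fin n) (Fin n) ℂ) (γ α β : Fin n)
    (z : Fin n → ℂ) : ℂ :=
  (dT γ (gI g α β) z - dT α (gI g β γ) z - dT β (gI g α γ) z) / 2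

/-- Secondary field `F^x_{αγβ}`. -/
def Fx {n : ℕ} (g : (Fin n → ℂ) → Matrix (Fin n) (Fin n) ℂ) (α γ β : Fin n)
    (z : Fin n → ℂ) : ℂ :=
  dX γ (gI g α β) z - dX β (gI g α γ) z

/-- Secondary field `F^t_{αγβ}`. -/
def Ft {n : ℕ} (g : (Fin n → ℂ) → Matrix (Fin n) (Fin n) ℂ) (α γ β : Fin n)
    (z : Fin n → ℂ) : ℂ :=
  dT γ (gI g α β) z - dT β (gI g α γ) z

/-- The Lagrangian `L(z,v) = sqrt(Re Σ g_{αβ̄}(z) v^α conj(v^β))`. -/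
def Lag {n : ℕ} (g : (Fin n → ℂ) → Matrix (Fin n) (Fin n) ℂ) (z v : Fin n → ℂ) : ℝ :=
  Real.sqrt (∑ α, ∑ β, g z α β * v α * (starRingEnd ℂ) (v β)).re

/-- Wirtinger derivative with respect to `conj(v^γ)` of a real-valued function on `ℂⁿ`:
`½(∂/∂(Re v^γ) + i·∂/∂(Im v^γ))`. -/
def dWbarR {n : ℕ} (γ : Fin n) (f : (Fin n → ℂ) → ℝ) (v : Fin n → ℂ) : ℂ :=
  ((deriv (fun s : ℝ => f (fun i => v i + (s : ℂ) * eV n γ i)) 0 : ℝ) +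
    Complex.I *
      (deriv (fun s : ℝ => f (fun i => v i + (s : ℂ) * Complex.I * eV n γ i)) 0 : ℝ)) / 2

/-- The Lagrangian speed `L(σ)` of a curve `z : ℝ → ℂⁿ`. -/
def curveL {n : ℕ} (g : (Fin n → ℂ) → Matrix (Fin n) (Fin n) ℂ) (z : ℝ → Fin n → ℂ)
    (σ : ℝ) : ℝ :=
  Lag g (z σ) (fun α => deriv (fun τ => z τ α) σ)

/-- `Dz^α = (1/L)·dz^α/dσ`. -/
def Dz {n : ℕ} (g : (Fin n → ℂ) → Matrix (Fin n) (Fin n) ℂ) (z : ℝ → Fin n → ℂ)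
    (α : Fin n) (σ : ℝ) : ℂ :=
  (curveL g z σ : ℂ)⁻¹ * deriv (fun τ => z τ α) σ

/-- `D²z^α = (1/L)·d/dσ((1/L)·dz^α/dσ)`. -/
def D2z {n : ℕ} (g : (Fin n → ℂ) → Matrix (Fin n) (Fin n) ℂ) (z : ℝ → Fin n → ℂ)
    (α : Fin n) (σ : ℝ) : ℂ :=
  (curveL g z σ : ℂ)⁻¹ *
    deriv (fun τ => (curveL g z τ : ℂ)⁻¹ * deriv (fun s => z s α) τ) σ

/-- `Dx^α = (1/L)·dx^α/dσ`. -/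
def Dx {n : ℕ} (g : (Fin n → ℂ) → Matrix (Fin n) (Fin n) ℂ) (z : ℝ → Fin n → ℂ)
    (α : Fin n) (σ : ℝ) : ℝ :=
  (curveL g z σ)⁻¹ * deriv (fun τ => (z τ α).re) σ

/-- `Dt^α = (1/L)·dt^α/dσ`. -/
def Dt {n : ℕ} (g : (Fin n → ℂ) → Matrix (Fin n) (Fin n) ℂ) (z : ℝ → Fin n → ℂ)
    (α : Fin n) (σ : ℝ) : ℝ :=
  (curveL g z σ)⁻¹ * deriv (fun τ => (z τ α).im) σ

/-- `D²x^α = (1/L)·d/dσ((1/L)·dx^α/dσ)`. -/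
def D2x {n : ℕ} (g : (Fin n → ℂ) → Matrix (Fin n) (Fin n) ℂ) (z : ℝ → Fin n → ℂ)
    (α : Fin n) (σ : ℝ) : ℝ :=
  (curveL g z σ)⁻¹ *
    deriv (fun τ => (curveL g z τ)⁻¹ * deriv (fun s => (z s α).re) τ) σ

/-- `D²t^α = (1/L)·d/dσ((1/L)·dt^α/dσ)`. -/
def D2t {n : ℕ} (g : (Fin n → ℂ) → Matrix (Fin n) (Fin n) ℂ) (z : ℝ → Fin n → ℂ)
    (α : Fin n) (σ : ℝ) : ℝ :=
  (curveL g z σ)⁻¹ *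
    deriv (fun τ => (curveL g z τ)⁻¹ * deriv (fun s => (z s α).im) τ) σ

/-- The complex geodesic equation (Theorem 1's equation) for the curve `z`. -/
def GeodesicEq {n : ℕ} (g : (Fin n → ℂ) → Matrix (Fin n) (Fin n) ℂ)
    (z : ℝ → Fin n → ℂ) : Prop :=
  ∀ (γ : Fin n) (σ : ℝ),
    ∑ μ, g (z σ) μ γ * D2z g z μ σ =
      (∑ α, ∑ β, (dWbar γ (gF g α β) (z σ) - dWbar β (gF g α γ) (z σ)) *
          Dz g z α σ * (starRingEnd ℂ) (Dz g z β σ)) -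
        ∑ α, ∑ β, dW α (gF g β γ) (z σ) * Dz g z α σ * Dz g z β σ

/-- The real part of the metric as a real matrix. -/
def gRmat {n : ℕ} (g : (Fin n → ℂ) → Matrix (Fin n) (Fin n) ℂ) (z : Fin n → ℂ) :
    Matrix (Fin n) (Fin n) ℝ :=
  Matrix.of fun i j => (g z i j).re

/-- The link tensor `ε^η_γ = Σ_ν g^I_{νγ̄} ((g^R)⁻¹)_{νη}`. -/
def eps {n : ℕ} (g : (Fin n → ℂ) → Matrix (Fin n) (Fin n) ℂ) (z : Fin n → ℂ)
    (η γ : Fin n) : ℝ :=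
  ∑ ν, (g z ν γ).im * (gRmat g z)⁻¹ ν η

/-! Contracting with `w^α w^β` only sees the symmetric part `A_{αβ} + A_{βα}` of a coefficient
matrix. Splitting every derivative of `g_{αβ̄}` into the derivatives of `g^R` and `g^I` and using
that `g^R` is symmetric and `g^I` antisymmetric, the symmetrized coefficients of the two sides
become the same polynomial in `i`, once `i² = -1`. -/

theorem deriv_eq_deriv_re_add_I_mul_deriv_im {h : ℝ → ℂ} {x : ℝ}
    (hh : DifferentiableAt ℝ h x) :
    deriv h x = deriv (fun s => ((h s).re : ℂ)) x + I * deriv (fun s => ((h s).im : ℂ)) x := by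
  have hre : HasDerivAt (fun s => ((h s).re : ℂ)) (deriv h x).re x :=
    (reCLM.hasFDerivAt.comp_hasDerivAt x hh.hasDerivAt).ofReal_comp
  have him : HasDerivAt (fun s => ((h s).im : ℂ)) (deriv h x).im x :=
    (imCLM.hasFDerivAt.comp_hasDerivAt x hh.hasDerivAt).ofReal_comp
  rw [hre.deriv, him.deriv, mul_comm, re_add_im]

theorem sum_sum_mul_mul_eq_of_add_transpose_eq {ι K : Type*} [Fintype ι] [Field K]
    [NeZero (2 : K)] {A B : ι → ι → K} (w : ι → K)
    (h : ∀ i j, A i j + A j i = B i j + B j i) :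
    ∑ i, ∑ j, A i j * w i * w j = ∑ i, ∑ j, B i j * w i * w j := by
  have two_mul_eq (C : ι → ι → K) :
      2 * ∑ i, ∑ j, C i j * w i * w j = ∑ i, ∑ j, (C i j + C j i) * w i * w j := by
    have transpose : ∑ i, ∑ j, C i j * w i * w j = ∑ i, ∑ j, C j i * w i * w j := by
      rw [Finset.sum_comm]
      exact Finset.sum_congr rfl fun i _ => Finset.sum_congr rfl fun j _ => by ring
    simp only [add_mul, Finset.sum_add_distrib, ← transpose, two_mul]
  apply mul_left_cancel₀ (two_ne_zero (α := K))
  simp only [two_mul_eq, h]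

section HermitianMetric

variable {n : ℕ}

theorem dX_eq_re_add_I_mul_im (k : Fin n) {f : (Fin n → ℂ) → ℂ} {z : Fin n → ℂ}
    (hf : DifferentiableAt ℝ f z) :
    dX k f z = dX k (fun v => ((f v).re : ℂ)) z + I * dX k (fun v => ((f v).im : ℂ)) z := by
  refine deriv_eq_deriv_re_add_I_mul_deriv_im (DifferentiableAt.comp (0 : ℝ) ?_ (by fun_prop))
  simpa using hf

theorem dT_eq_re_add_I_mul_im (k : Fin n) {f : (Fin n → ℂ) → ℂ} {z : Fin n → ℂ}
    (hf : DifferentiableAt ℝ f z) :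
    dT k f z = dT k (fun v => ((f v).re : ℂ)) z + I * dT k (fun v => ((f v).im : ℂ)) z := by
  refine deriv_eq_deriv_re_add_I_mul_deriv_im (DifferentiableAt.comp (0 : ℝ) ?_ (by fun_prop))
  simpa using hf

theorem dX_neg (k : Fin n) (f : (Fin n → ℂ) → ℂ) (z : Fin n → ℂ) :
    dX k (-f) z = -dX k f z :=
  deriv.neg

theorem dT_neg (k : Fin n) (f : (Fin n → ℂ) → ℂ) (z : Fin n → ℂ) :
    dT k (-f) z = -dT k f z :=
  deriv.neg

variable {g : (Fin n → ℂ) → Matrix (Fin n) (Fin n) ℂ}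

theorem MetricC1.dX_gF (hg : MetricC1 g) (k i j : Fin n) (z : Fin n → ℂ) :
    dX k (gF g i j) z = dX k (gR g i j) z + I * dX k (gI g i j) z :=
  dX_eq_re_add_I_mul_im k ((hg i j).differentiable one_ne_zero z)

theorem MetricC1.dT_gF (hg : MetricC1 g) (k i j : Fin n) (z : Fin n → ℂ) :
    dT k (gF g i j) z = dT k (gR g i j) z + I * dT k (gI g i j) z :=
  dT_eq_re_add_I_mul_im k ((hg i j).differentiable one_ne_zero z)

theorem IsHermitianMetric.gR_comm (hherm : IsHermitianMetric g) (i j : Fin n) :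
    gR g i j = gR g j i := by
  funext v
  simp [gR, hherm v i j]

theorem IsHermitianMetric.gI_anticomm (hherm : IsHermitianMetric g) (i j : Fin n) :
    gI g i j = -gI g j i := by
  funext v
  simp [gI, hherm v i j]

end HermitianMetric

/-- Proposition 2, part 2 (contracted with a real vector `w`):
`Σ (∂_γ̄ g_{αβ̄} − ∂_β̄ g_{αγ̄} + ∂_α g_{βγ̄}) w^α w^β
  = Σ (½ ∂^x_γ g^R − Φ^{γ--} + i Φ^{γ-+}) w^α w^β`. -/
theorem prop2_part2 {n : ℕ} (g : (Fin n → ℂ) → Matrix (Fin n) (Fin n) ℂ)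
    (hg : MetricC1 g) (hherm : IsHermitianMetric g)
    (z : Fin n → ℂ) (γ : Fin n) (w : Fin n → ℝ) :
    ∑ α, ∑ β,
        (dWbar γ (gF g α β) z - dWbar β (gF g α γ) z + dW α (gF g β γ) z) *
          (w α : ℂ) * (w β : ℂ) =
      ∑ α, ∑ β,
        (dX γ (gR g α β) z / 2 - PhiMM g γ α β z + Complex.I * PhiMP g γ α β z) *
          (w α : ℂ) * (w β : ℂ) := by
  refine sum_sum_mul_mul_eq_of_add_transpose_eq (fun α => (w α : ℂ)) fun α β => ?_
  simp only [dWbar, dW, PhiMM, PhiMP, hg.dX_gF, hg.dT_gF, hherm.gR_comm β α,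
    hherm.gI_anticomm β α, dX_neg, dT_neg]
  linear_combination (-(dT β (gI g α γ) z + dT α (gI g β γ) z)) * I_sq
end
end

section
/- (Corollary 1: reduction to the gravitational geodesic.) Let n = 4 and let g be a C¹ metric on ℂ⁴ that is pointwise real symmetric (g^I ≡ 0, g = g^R symmetric) and positive definite, and assume ∂^x_1 g_{αβ̄} ≡ 0 and ∂^t_γ g_{αβ̄} ≡ 0 for γ ∈ {2,3,4} and all α, β. Let z = x + it : ℝ → ℂ⁴ be a C² curve with L(σ) > 0 satisfying the complex geodesic equation, and suppose that along the curve Dx¹ = 0 and Dt^γ = 0 for γ ∈ {2,3,4}. Then for every γ ∈ {2,3,4} and every σ: Σ_μ g_{μγ̄}(z) D²x^μ = Σ_{α,β} Φ^{γ++}_{αβ} Dx^α Dx^β − Σ_β ∂^t_1 g_{βγ̄} · Dt¹ · Dx^β + ½·∂^x_γ g_{11̄} · (Dt¹)², all coefficient functions evaluated at z(σ); i.e. the projective geodesic reduces to the classical gravitational geodesic form in the coordinates (t¹, x², x³, x⁴). -/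
open Complex
open scoped ComplexOrder

noncomputable section

/-!
For a real metric every `∂^x g` and `∂^t g` is real, so the real part of each summand of the
complex geodesic equation is a real quadratic form in `(Dx, Dt)`. Under the hypotheses `Dx` is
supported off the index `1`, `Dt` on it, and the only surviving `∂^t` is `∂^t_1`. The `Dt Dt`
block then collapses to `½ ∂^x_γ g_{11̄} (Dt¹)²` (the two `∂^x_1 g_{1γ̄}` contributions cancel),
and each of the two mixed blocks contributes half of `-∂^t_1 g_{βγ̄} Dt¹ Dx^β`.
-/

section Reduction

variable {ι : Type*}

/-- `X a i j`, `T a i j` stand for `∂^x_a g_{ij̄}`, `∂^t_a g_{ij̄}`, and `x`, `t` for `Dx`, `Dt`. -/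
def realGeodesicTerm (X T : ι → ι → ι → ℝ) (x t : ι → ℝ) (γ α β : ι) : ℝ :=
  ((X γ α β - X β α γ - X α β γ) * x α * x β + (X γ α β - X β α γ + X α β γ) * t α * t β
    - (T γ α β - T β α γ + T α β γ) * t α * x β + (T γ α β - T β α γ - T α β γ) * x α * t β) / 2

variable {X T : ι → ι → ι → ℝ} {x t : ι → ℝ} {i₀ γ : ι}

theorem realGeodesicTerm_eq_of_single [DecidableEq ι] (hγ : γ ≠ i₀) (hx : x i₀ = 0)
    (ht : ∀ j ≠ i₀, t j = 0) (hT : ∀ j ≠ i₀, ∀ a b, T j a b = 0) (α β : ι) :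
    realGeodesicTerm X T x t γ α β =
      (X γ α β - X α β γ - X β α γ) / 2 * x α * x β + X γ α β / 2 * t α * t β
        - T i₀ β γ / 2 * t α * x β - T i₀ α γ / 2 * x α * t β := by
  unfold realGeodesicTerm
  by_cases hα : α = i₀ <;> by_cases hβ : β = i₀
  · subst hα hβ; simp only [hx, hT γ hγ]; ring
  · subst hα; simp only [hx, hT γ hγ, hT β hβ, ht β hβ]; ring
  · subst hβ; simp only [hx, hT γ hγ, hT α hα, ht α hα]; ring
  · simp only [hT γ hγ, hT α hα, hT β hβ, ht α hα, ht β hβ]; ring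

theorem sum_sum_realGeodesicTerm_of_single [Fintype ι] [DecidableEq ι] (hγ : γ ≠ i₀)
    (hx : x i₀ = 0) (ht : ∀ j ≠ i₀, t j = 0) (hT : ∀ j ≠ i₀, ∀ a b, T j a b = 0) :
    ∑ α, ∑ β, realGeodesicTerm X T x t γ α β =
      ∑ α, ∑ β, (X γ α β - X α β γ - X β α γ) / 2 * x α * x β
        - ∑ β, T i₀ β γ * t i₀ * x β + X γ i₀ i₀ / 2 * t i₀ ^ 2 := by
  have hzero : ∀ j ≠ i₀, ∀ c : ℝ, c * t j = 0 := fun j hj c => by rw [ht j hj, mul_zero]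
  have htt : ∑ α, ∑ β, X γ α β / 2 * t α * t β = X γ i₀ i₀ / 2 * t i₀ ^ 2 := by
    rw [Fintype.sum_eq_single i₀ fun α hα => by simp [ht α hα],
      Fintype.sum_eq_single i₀ fun β hβ => hzero β hβ _]
    ring
  have htx : ∑ α, ∑ β, T i₀ β γ / 2 * t α * x β = ∑ β, T i₀ β γ / 2 * t i₀ * x β :=
    Fintype.sum_eq_single i₀ fun α hα => by simp [ht α hα]
  have hxt : ∑ α, ∑ β, T i₀ α γ / 2 * x α * t β = ∑ α, T i₀ α γ / 2 * x α * t i₀ :=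
    Finset.sum_congr rfl fun α _ => Fintype.sum_eq_single i₀ fun β hβ => hzero β hβ _
  simp only [realGeodesicTerm_eq_of_single hγ hx ht hT, Finset.sum_sub_distrib,
    Finset.sum_add_distrib, htt, htx, hxt]
  have hcross : ∑ β, T i₀ β γ * t i₀ * x β =
      ∑ β, T i₀ β γ / 2 * t i₀ * x β + ∑ α, T i₀ α γ / 2 * x α * t i₀ := by
    rw [← Finset.sum_add_distrib]
    exact Finset.sum_congr rfl fun β _ => by ring
  rw [hcross]
  ring

end Reduction

theorem HasDerivAt.re {f : ℝ → ℂ} {f' : ℂ} {x : ℝ} (h : HasDerivAt f f' x) :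
    HasDerivAt (fun t => (f t).re) f'.re x :=
  reCLM.hasFDerivAt.comp_hasDerivAt x h

theorem HasDerivAt.im {f : ℝ → ℂ} {f' : ℂ} {x : ℝ} (h : HasDerivAt f f' x) :
    HasDerivAt (fun t => (f t).im) f'.im x :=
  imCLM.hasFDerivAt.comp_hasDerivAt x h

theorem im_deriv_eq_zero_of_forall_im_eq_zero {f : ℝ → ℂ} (hf : ∀ s, (f s).im = 0) (x : ℝ) :
    (deriv f x).im = 0 := by
  by_cases h : DifferentiableAt ℝ f x
  · have him : HasDerivAt (fun s => (f s).im) (deriv f x).im x := h.hasDerivAt.im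
    simp only [hf] at him
    exact him.unique (hasDerivAt_const x 0)
  · rw [deriv_zero_of_not_differentiableAt h, zero_im]

section Curve

variable {n : ℕ} (g : (Fin n → ℂ) → Matrix (Fin n) (Fin n) ℂ) {z : ℝ → Fin n → ℂ}

theorem Dz_eq_Dx_add_I_mul_Dt {α : Fin n} {σ : ℝ}
    (hz : DifferentiableAt ℝ (fun τ => z τ α) σ) :
    Dz g z α σ = Dx g z α σ + I * Dt g z α σ := by
  simp only [Dz, Dx, Dt, hz.hasDerivAt.re.deriv, hz.hasDerivAt.im.deriv, ← ofReal_inv]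
  apply Complex.ext <;> simp

theorem D2z_eq_D2x_add_I_mul_D2t {α : Fin n} {σ : ℝ} (hz : Differentiable ℝ z)
    (hv : DifferentiableAt ℝ (fun τ => (curveL g z τ : ℂ)⁻¹ * deriv (fun s => z s α) τ) σ) :
    D2z g z α σ = D2x g z α σ + I * D2t g z α σ := by
  have hzα : ∀ τ, DifferentiableAt ℝ (fun s => z s α) τ := fun τ =>
    (differentiable_pi.mp hz α).differentiableAt
  have hre : (fun τ => (curveL g z τ)⁻¹ * deriv (fun s => (z s α).re) τ) =
      fun τ => ((curveL g z τ : ℂ)⁻¹ * deriv (fun s => z s α) τ).re := by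
    funext τ
    simp [(hzα τ).hasDerivAt.re.deriv, ← ofReal_inv]
  have him : (fun τ => (curveL g z τ)⁻¹ * deriv (fun s => (z s α).im) τ) =
      fun τ => ((curveL g z τ : ℂ)⁻¹ * deriv (fun s => z s α) τ).im := by
    funext τ
    simp [(hzα τ).hasDerivAt.im.deriv, ← ofReal_inv]
  rw [D2z, D2x, D2t, hre, him, hv.hasDerivAt.re.deriv, hv.hasDerivAt.im.deriv, ← ofReal_inv]
  apply Complex.ext <;> simp

theorem differentiableAt_curveL (hg : MetricC1 g) (hz : ContDiff ℝ 2 z) {σ : ℝ}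
    (hL : 0 < curveL g z σ) : DifferentiableAt ℝ (curveL g z) σ := by
  have hgz : ∀ α β, Differentiable ℝ (fun τ => g (z τ) α β) := fun α β =>
    ((hg α β).differentiable one_ne_zero).comp (hz.differentiable (by norm_num))
  have hz' : ∀ α, Differentiable ℝ (deriv fun τ => z τ α) := fun α =>
    (contDiff_pi.mp hz α).differentiable_deriv_two
  have hz'' : ∀ β, Differentiable ℝ fun τ => (starRingEnd ℂ) (deriv (fun s => z s β) τ) :=
    fun β => conjCLE.differentiable.comp (hz' β)
  have hQ : Differentiable ℝ fun τ => ∑ α, ∑ β, g (z τ) α β * deriv (fun s => z s α) τ *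
      (starRingEnd ℂ) (deriv (fun s => z s β) τ) :=
    Differentiable.fun_sum fun α _ => Differentiable.fun_sum fun β _ =>
      ((hgz α β).mul (hz' α)).mul (hz'' β)
  exact (reCLM.differentiable.comp hQ σ).sqrt (Real.sqrt_pos.mp hL).ne'

theorem differentiableAt_unitVelocity (hg : MetricC1 g) (hz : ContDiff ℝ 2 z) {σ : ℝ}
    (hL : 0 < curveL g z σ) (α : Fin n) :
    DifferentiableAt ℝ (fun τ => (curveL g z τ : ℂ)⁻¹ * deriv (fun s => z s α) τ) σ := by
  have hLinv : DifferentiableAt ℝ (fun τ => (curveL g z τ : ℂ)⁻¹) σ := by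
    simp only [← ofReal_inv]
    exact ofRealCLM.differentiableAt.comp σ ((differentiableAt_curveL g hg hz hL).inv hL.ne')
  exact hLinv.mul (contDiff_pi.mp hz α).differentiable_deriv_two.differentiableAt

end Curve

section RealMetric

variable {n : ℕ} {g : (Fin n → ℂ) → Matrix (Fin n) (Fin n) ℂ}

theorem im_dX_gF_eq_zero (hreal : ∀ w i j, (g w i j).im = 0) (a i j : Fin n)
    (w : Fin n → ℂ) : (dX a (gF g i j) w).im = 0 :=
  im_deriv_eq_zero_of_forall_im_eq_zero (fun _ => hreal _ i j) 0

theorem im_dT_gF_eq_zero (hreal : ∀ w i j, (g w i j).im = 0) (a i j : Fin n)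
    (w : Fin n → ℂ) : (dT a (gF g i j) w).im = 0 :=
  im_deriv_eq_zero_of_forall_im_eq_zero (fun _ => hreal _ i j) 0

theorem gR_eq_gF (hreal : ∀ w i j, (g w i j).im = 0) (i j : Fin n) : gR g i j = gF g i j :=
  funext fun w => Complex.ext (by simp [gR, gF]) (by simp [gR, gF, hreal])

theorem re_geodesic_summand (hreal : ∀ w i j, (g w i j).im = 0) (w : Fin n → ℂ)
    (v : Fin n → ℂ) (γ α β : Fin n) :
    ((dWbar γ (gF g α β) w - dWbar β (gF g α γ) w) * v α * (starRingEnd ℂ) (v β) -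
        dW α (gF g β γ) w * v α * v β).re =
      realGeodesicTerm (fun a i j => (dX a (gF g i j) w).re)
        (fun a i j => (dT a (gF g i j) w).re) (fun i => (v i).re) (fun i => (v i).im) γ α β := by
  simp only [dWbar, dW, realGeodesicTerm, sub_re, mul_re, mul_im, add_re, add_im, sub_im,
    div_ofNat_re, div_ofNat_im, I_re, I_im, conj_re, conj_im, im_dX_gF_eq_zero hreal,
    im_dT_gF_eq_zero hreal]
  ring

variable {z : ℝ → Fin n → ℂ}

theorem GeodesicEq.re_projection (hg : MetricC1 g) (hreal : ∀ w i j, (g w i j).im = 0)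
    (hz : ContDiff ℝ 2 z) (hgeo : GeodesicEq g z) (γ : Fin n) {σ : ℝ}
    (hL : 0 < curveL g z σ) :
    ∑ μ, (g (z σ) μ γ).re * D2x g z μ σ =
      ∑ α, ∑ β, realGeodesicTerm (fun a i j => (dX a (gF g i j) (z σ)).re)
        (fun a i j => (dT a (gF g i j) (z σ)).re) (fun i => Dx g z i σ) (fun i => Dt g z i σ)
        γ α β := by
  have hzd : Differentiable ℝ z := hz.differentiable (by norm_num)
  have hDz : ∀ α, Dz g z α σ = Dx g z α σ + I * Dt g z α σ := fun α =>
    Dz_eq_Dx_add_I_mul_Dt g ((differentiable_pi.mp hzd α).differentiableAt)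
  have hD2z : ∀ μ, D2z g z μ σ = D2x g z μ σ + I * D2t g z μ σ := fun μ =>
    D2z_eq_D2x_add_I_mul_D2t g hzd (differentiableAt_unitVelocity g hg hz hL μ)
  have h := congrArg re (hgeo γ σ)
  simp only [← Finset.sum_sub_distrib, re_sum,
    re_geodesic_summand hreal (z σ) (fun α => Dz g z α σ)] at h
  simpa [hDz, hD2z, hreal] using h

end RealMetric

/-- Indices `1,2,3,4` of the paper are `0,1,2,3 : Fin 4`, so the distinguished index `1` is `0`. -/
theorem gravitational_reduction_general
    (g : (Fin 4 → ℂ) → Matrix (Fin 4) (Fin 4) ℂ)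
    (hg : MetricC1 g)
    (hreal : ∀ w i j, (g w i j).im = 0)
    (ht : ∀ γ : Fin 4, γ ≠ 0 → ∀ (α β : Fin 4) (w : Fin 4 → ℂ), dT γ (gF g α β) w = 0)
    (z : ℝ → Fin 4 → ℂ) (hz : ContDiff ℝ 2 z)
    (hL : ∀ σ, 0 < curveL g z σ) (hgeo : GeodesicEq g z)
    (hDx1 : ∀ σ, Dx g z (0 : Fin 4) σ = 0)
    (hDt : ∀ γ : Fin 4, γ ≠ 0 → ∀ σ, Dt g z γ σ = 0)
    (γ : Fin 4) (hγ : γ ≠ 0) (σ : ℝ) :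
    ∑ μ, gF g μ γ (z σ) * (D2x g z μ σ : ℂ) =
      (∑ α, ∑ β, PhiPP g γ α β (z σ) * (Dx g z α σ : ℂ) * (Dx g z β σ : ℂ)) -
        (∑ β, dT (0 : Fin 4) (gF g β γ) (z σ) * (Dt g z (0 : Fin 4) σ : ℂ) *
          (Dx g z β σ : ℂ)) +
        dX γ (gF g (0 : Fin 4) (0 : Fin 4)) (z σ) / 2 * (Dt g z (0 : Fin 4) σ : ℂ) ^ 2 := by
  have hproj := hgeo.re_projection hg hreal hz γ (hL σ)
  rw [sum_sum_realGeodesicTerm_of_single hγ (hDx1 σ) (fun j hj => hDt j hj σ)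
    (fun j hj a b => by simp [ht j hj])] at hproj
  apply Complex.ext
  · simpa [PhiPP, gR_eq_gF hreal, gF, im_dX_gF_eq_zero hreal, im_dT_gF_eq_zero hreal,
      ← ofReal_pow] using hproj
  · simp [PhiPP, gR_eq_gF hreal, gF, hreal, im_dX_gF_eq_zero hreal, im_dT_gF_eq_zero hreal,
      ← ofReal_pow]

/-- Corollary 1: for a real symmetric positive definite metric on `ℂ⁴` (indices `1,2,3,4`
rendered as `0,1,2,3 : Fin 4`, so the distinguished index `1` is `0`), independent of `x¹`
and of `t²,t³,t⁴`, a complex geodesic with `Dx¹ = 0` and `Dt² = Dt³ = Dt⁴ = 0` projects to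
the classical gravitational geodesic in the coordinates `(t¹, x², x³, x⁴)`. -/
theorem gravitational_reduction
    (g : (Fin 4 → ℂ) → Matrix (Fin 4) (Fin 4) ℂ)
    (hg : MetricC1 g) (hherm : IsHermitianMetric g)
    (hreal : ∀ w i j, (g w i j).im = 0)
    (hpos : ∀ w, (g w).PosDef)
    (hx1 : ∀ (α β : Fin 4) (w : Fin 4 → ℂ), dX (0 : Fin 4) (gF g α β) w = 0)
    (ht : ∀ γ : Fin 4, γ ≠ 0 → ∀ (α β : Fin 4) (w : Fin 4 → ℂ), dT γ (gF g α β) w = 0)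
    (z : ℝ → Fin 4 → ℂ) (hz : ContDiff ℝ 2 z)
    (hL : ∀ σ, 0 < curveL g z σ) (hgeo : GeodesicEq g z)
    (hDx1 : ∀ σ, Dx g z (0 : Fin 4) σ = 0)
    (hDt : ∀ γ : Fin 4, γ ≠ 0 → ∀ σ, Dt g z γ σ = 0)
    (γ : Fin 4) (hγ : γ ≠ 0) (σ : ℝ) :
    ∑ μ, gF g μ γ (z σ) * (D2x g z μ σ : ℂ) =
      (∑ α, ∑ β, PhiPP g γ α β (z σ) * (Dx g z α σ : ℂ) * (Dx g z β σ : ℂ)) -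
        (∑ β, dT (0 : Fin 4) (gF g β γ) (z σ) * (Dt g z (0 : Fin 4) σ : ℂ) *
          (Dx g z β σ : ℂ)) +
        dX γ (gF g (0 : Fin 4) (0 : Fin 4)) (z σ) / 2 * (Dt g z (0 : Fin 4) σ : ℂ) ^ 2 :=
  gravitational_reduction_general g hg hreal ht z hz hL hgeo hDx1 hDt γ hγ σ
end
end
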